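/- arXiv:2310.15242 — 2 statements merged into one kernel-verified Lean document; each statement's English description precedes it below -/
import Mathlib

section
/- Let Γ₁ and Γ₂ be connected, bounded-valence graphs and f: V(Γ₁) → V(Γ₂) a (λ,λ)-quasi-isometry. Let Λ ⊆ Γ₁ and Λ' ⊆ Γ₂ be connected subgraphs such that f maps V(Λ) into V(Λ') and the restriction of f to V(Λ) is a (λ,λ)-quasi-isometry from (V(Λ), dist_Λ) to (V(Λ'), dist_{Λ'}). Then there is a constant C > 0, depending only on λ and the maximum vertex degree of Γ₁, such that: for every m ∈ ℕ, if vs(Λ) ≥ m then vs(Λ') ≥ C·m. -/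
open SimpleGraph

namespace Paper

variable {V W : Type*}

/-- Locally finite graph: every vertex has finite degree. -/
def LocFin (G : SimpleGraph V) : Prop := ∀ v : V, (G.neighborSet v).Finite

/-- All vertex degrees are at most `d`. -/
def DegLe (G : SimpleGraph V) (d : ℕ) : Prop :=
  ∀ v : V, (G.neighborSet v).Finite ∧ (G.neighborSet v).ncard ≤ d

/-- Bounded valence. -/
def BddVal (G : SimpleGraph V) : Prop := ∃ d : ℕ, DegLe G d

/-- `(l, e)`-quasi-isometric embedding between the vertex sets of two graphs. -/
def IsQIE (G : SimpleGraph V) (H : SimpleGraph W) (l e : ℝ) (f : V → W) : Prop :=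
  ∀ x y : V,
    (G.dist x y : ℝ) / l - e ≤ (H.dist (f x) (f y) : ℝ) ∧
      (H.dist (f x) (f y) : ℝ) ≤ l * (G.dist x y : ℝ) + e

/-- Coarse surjectivity: every vertex of the target lies within distance `e` of the image. -/
def CoarseSurj (H : SimpleGraph W) (e : ℝ) (f : V → W) : Prop :=
  ∀ w : W, ∃ x : V, (H.dist w (f x) : ℝ) ≤ e

/-- `(l, e)`-quasi-isometry. -/
def IsQI (G : SimpleGraph V) (H : SimpleGraph W) (l e : ℝ) (f : V → W) : Prop :=
  IsQIE G H l e f ∧ CoarseSurj H e f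

/-- `g` is an `h`-quasi-inverse of `f`. -/
def IsQInv (G : SimpleGraph V) (h : ℝ) (f : V → W) (g : W → V) : Prop :=
  ∀ x : V, (G.dist (g (f x)) x : ℝ) ≤ h

/-- Reachability by a walk all of whose vertices avoid the set `S`. -/
def ReachOut (G : SimpleGraph V) (S : Set V) (a b : V) : Prop :=
  ∃ w : G.Walk a b, ∀ v ∈ w.support, v ∉ S

/-- A one-way infinite simple ray. -/
def RayIn (G : SimpleGraph V) (r : ℕ → V) : Prop :=
  Function.Injective r ∧ ∀ n : ℕ, G.Adj (r n) (r (n + 1))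

/-- End-equivalence of rays: for every finite vertex set they have tails in the same
connected component of the graph with that set deleted. -/
def EndEquiv (G : SimpleGraph V) (r₁ r₂ : ℕ → V) : Prop :=
  ∀ S : Set V, S.Finite → ∃ N : ℕ, ∀ m n : ℕ, N ≤ m → N ≤ n → ReachOut G S (r₁ m) (r₂ n)

/-- Two points (encoded as sequences: a constant sequence for a vertex, a ray for an end)
lie in distinct connected components of `G` with the vertex set `S` deleted. -/
def SepComps (G : SimpleGraph V) (S : Set V) (a b : ℕ → V) : Prop :=
  ∃ N : ℕ,
    (∀ m n : ℕ, N ≤ m → N ≤ n → ReachOut G S (a m) (a n)) ∧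
    (∀ m n : ℕ, N ≤ m → N ≤ n → ReachOut G S (b m) (b n)) ∧
    (∀ m n : ℕ, N ≤ m → N ≤ n → ¬ ReachOut G S (a m) (b n))

/-- `vs(G) ≥ N`: any vertex set separating two ends has at least `N` elements. -/
def VsGe (G : SimpleGraph V) (N : ℕ) : Prop :=
  ∀ r₁ r₂ : ℕ → V, RayIn G r₁ → RayIn G r₂ →
    ∀ S : Set V, S.Finite → SepComps G S r₁ r₂ → N ≤ S.ncard

/-- `vs(G) ≥ c` for a real threshold `c`. -/
def VsGeR (G : SimpleGraph V) (c : ℝ) : Prop :=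
  ∀ r₁ r₂ : ℕ → V, RayIn G r₁ → RayIn G r₂ →
    ∀ S : Set V, S.Finite → SepComps G S r₁ r₂ → c ≤ (S.ncard : ℝ)

/-- `U` is a connected component of `G` with the vertex set `A` deleted. -/
def IsCompOut (G : SimpleGraph V) (A U : Set V) : Prop :=
  ∃ a ∈ U, ∀ b : V, ReachOut G A a b ↔ b ∈ U

/-- The edge coboundary `δb` of a vertex set `b`. -/
def cob (G : SimpleGraph V) (b : Set V) : Set (Sym2 V) :=
  {e | ∃ x y : V, e = s(x, y) ∧ G.Adj x y ∧ x ∈ b ∧ y ∉ b}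

/-- Membership in the Boolean ring `𝓑G` of vertex sets with finite coboundary. -/
def MemBX (G : SimpleGraph V) (b : Set V) : Prop := (cob G b).Finite

/-- The set of endpoints of the edges of `δb`. -/
def cobVerts (G : SimpleGraph V) (b : Set V) : Set V :=
  {v | ∃ w : V, s(v, w) ∈ cob G b}

/-- A tight element: both sides induce connected subgraphs. -/
def Tight (G : SimpleGraph V) (b : Set V) : Prop :=
  (G.induce b).Connected ∧ (G.induce bᶜ).Connected

/-- Vertices of `A` that are endpoints of an edge with the other endpoint in `U`. -/
def AttachSet (G : SimpleGraph V) (A U : Set V) : Set V :=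
  {v | v ∈ A ∧ ∃ u ∈ U, G.Adj v u}

/-- `incut(A) ≤ k` for a vertex set `A`, with the intrinsic metric of `G.induce A`. -/
def IncutBddSet (G : SimpleGraph V) (A : Set V) (k : ℕ) : Prop :=
  ∀ U : Set V, IsCompOut G A U →
    ∀ v w : A, (v : V) ∈ AttachSet G A U → (w : V) ∈ AttachSet G A U →
      (G.induce A).dist v w ≤ k

/-- `outcut(A) ≤ k` for a vertex set `A`. -/
def OutcutBddSet (G : SimpleGraph V) (A : Set V) (k : ℕ) : Prop :=
  ∀ U : Set V, IsCompOut G A U → IncutBddSet G U k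

/-- Uniform coboundary for a vertex set. -/
def UnifCobSet (G : SimpleGraph V) (A : Set V) : Prop :=
  (∃ k : ℕ, IncutBddSet G A k) ∧ (∃ k : ℕ, OutcutBddSet G A k)

/-- `incut(L) ≤ k` for a subgraph `L`, with its own intrinsic metric. -/
def IncutBddSub (G : SimpleGraph V) (L : G.Subgraph) (k : ℕ) : Prop :=
  ∀ U : Set V, IsCompOut G L.verts U →
    ∀ v w : L.verts, (v : V) ∈ AttachSet G L.verts U → (w : V) ∈ AttachSet G L.verts U →
      L.coe.dist v w ≤ k

/-- `outcut(L) ≤ k` for a subgraph `L`. -/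
def OutcutBddSub (G : SimpleGraph V) (L : G.Subgraph) (k : ℕ) : Prop :=
  ∀ U : Set V, IsCompOut G L.verts U → IncutBddSet G U k

/-- Uniform coboundary for a subgraph. -/
def UnifCobSub (G : SimpleGraph V) (L : G.Subgraph) : Prop :=
  (∃ k : ℕ, IncutBddSub G L k) ∧ (∃ k : ℕ, OutcutBddSub G L k)

/-- Quasi-transitive graph: the automorphism group has finitely many orbits of vertices. -/
def QuasiTransitive (G : SimpleGraph V) : Prop :=
  ∃ F : Set V, F.Finite ∧ ∀ v : V, ∃ e : G ≃g G, ∃ w ∈ F, e w = v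

/-- Hausdorff distance between two vertex sets is at most `r`. -/
def HausBdd (G : SimpleGraph V) (A B : Set V) (r : ℝ) : Prop :=
  (∀ a ∈ A, ∃ b ∈ B, (G.dist a b : ℝ) ≤ r) ∧ (∀ b ∈ B, ∃ a ∈ A, (G.dist a b : ℝ) ≤ r)

/-- Reachability by a walk avoiding the edge set `F`. -/
def ReachAvoidE (G : SimpleGraph V) (F : Set (Sym2 V)) (a b : V) : Prop :=
  ∃ w : G.Walk a b, ∀ e ∈ w.edges, e ∉ F

/-- The ends of the rays `r₁`, `r₂` are separated by deleting the edge set `F`. -/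
def SepEnds (G : SimpleGraph V) (F : Set (Sym2 V)) (r₁ r₂ : ℕ → V) : Prop :=
  ∃ N : ℕ, ∀ m n : ℕ, N ≤ m → N ≤ n → ¬ ReachAvoidE G F (r₁ m) (r₂ n)

/-- Accessibility: some `k ≥ 1` such that any two distinct ends can be separated by
deleting at most `k` edges. -/
def Accessible (G : SimpleGraph V) : Prop :=
  ∃ k : ℕ, 1 ≤ k ∧ ∀ r₁ r₂ : ℕ → V, RayIn G r₁ → RayIn G r₂ → ¬ EndEquiv G r₁ r₂ →
    ∃ F : Set (Sym2 V), F.Finite ∧ F.ncard ≤ k ∧ SepEnds G F r₁ r₂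

/-- `l`-quasi-action of a group on the vertex set of a graph. -/
def IsQAct {G₀ : Type*} [Group G₀] (G : SimpleGraph V) (l : ℝ) (φ : G₀ → V → V) : Prop :=
  (∀ g : G₀, IsQI G G l l (φ g)) ∧
  (∀ (g h : G₀) (x : V), (G.dist (φ (g * h) x) (φ g (φ h x)) : ℝ) ≤ l) ∧
  (∀ g : G₀, IsQInv G l (φ g) (φ g⁻¹) ∧ IsQInv G l (φ g⁻¹) (φ g))

/-- `B`-cobounded quasi-action. -/
def Cobdd {G₀ : Type*} [Group G₀] (G : SimpleGraph V) (B : ℝ) (φ : G₀ → V → V) : Prop :=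
  ∀ x y : V, ∃ g : G₀, (G.dist x (φ g y) : ℝ) ≤ B

/-- The diameter (in `ℕ`) of a vertex set. -/
noncomputable def setDiam (G : SimpleGraph V) (S : Set V) : ℕ :=
  sSup {d : ℕ | ∃ x ∈ S, ∃ y ∈ S, G.dist x y = d}

/-- 2-connected: connected, at least three vertices, and deleting any single vertex
leaves it connected. -/
def TwoConnected (G : SimpleGraph V) : Prop :=
  G.Connected ∧ (∃ a b c : V, a ≠ b ∧ a ≠ c ∧ b ≠ c) ∧
    ∀ v : V, (G.induce {w : V | w ≠ v}).Connected

/-- Tree decomposition. -/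
def IsTreeDecomp {VT : Type*} (X : SimpleGraph V) (T : SimpleGraph VT) (B : VT → Set V) :
    Prop :=
  T.IsTree ∧ (∀ x : V, ∃ u : VT, x ∈ B u) ∧
    ∀ u v w : VT, (∃ p : T.Walk u w, p.IsPath ∧ v ∈ p.support) → B u ∩ B w ⊆ B v

/-- Bounded adhesion. -/
def BddAdhesion {VT : Type*} (T : SimpleGraph VT) (B : VT → Set V) : Prop :=
  ∃ N : ℕ, ∀ u w : VT, T.Adj u w → (B u ∩ B w).Finite ∧ (B u ∩ B w).ncard ≤ N

/-- Connected parts. -/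
def ConnParts {VT : Type*} (X : SimpleGraph V) (B : VT → Set V) : Prop :=
  ∀ u : VT, (X.induce (B u)).Connected

/-- Replacing each bag by its closed `r`-neighbourhood. -/
def ballBag {VT : Type*} (X : SimpleGraph V) (B : VT → Set V) (r : ℕ) : VT → Set V :=
  fun u => {x : V | ∃ y ∈ B u, X.dist x y ≤ r}

/-- A point of `G` which is either a vertex lying outside `B(S;R)` (encoded as a constant
sequence) or an end (encoded as a ray representing it). -/
def PtSeq (G : SimpleGraph V) (S : Set V) (R : ℝ) (a : ℕ → V) : Prop :=
  (∃ v : V, a = Function.const ℕ v ∧ ∀ s ∈ S, R < (G.dist v s : ℝ)) ∨ RayIn G a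

/-- A subring of `𝓑G`: contains `∅`, and is closed under intersection and
symmetric difference. -/
def IsSubring (G : SimpleGraph V) (R : Set (Set V)) : Prop :=
  (∀ b ∈ R, MemBX G b) ∧ ∅ ∈ R ∧
    (∀ a ∈ R, ∀ b ∈ R, a ∩ b ∈ R) ∧ (∀ a ∈ R, ∀ b ∈ R, symmDiff a b ∈ R)

/-- The subring generated by a family. -/
def genSubring (G : SimpleGraph V) (E : Set (Set V)) : Set (Set V) :=
  ⋂₀ {R : Set (Set V) | IsSubring G R ∧ E ⊆ R}

/-- Two vertex sets are nested. -/
def Nested (a b : Set V) : Prop :=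
  a ∩ b = ∅ ∨ a ∩ bᶜ = ∅ ∨ aᶜ ∩ b = ∅ ∨ aᶜ ∩ bᶜ = ∅

/-- A nested family: closed under complementation and pairwise nested. -/
def NestedFam (E : Set (Set V)) : Prop :=
  (∀ b ∈ E, bᶜ ∈ E) ∧ ∀ a ∈ E, ∀ b ∈ E, Nested a b

/-- A `G₀`-invariant family of vertex sets. -/
def GInvFam (G₀ : Type*) [Group G₀] [MulAction G₀ V] (E : Set (Set V)) : Prop :=
  ∀ g : G₀, ∀ b ∈ E, (fun x => g • x) '' b ∈ E

/-- A `G₀`-finite family of vertex sets: it meets only finitely many orbits. -/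
def GFinFam (G₀ : Type*) [Group G₀] [MulAction G₀ V] (E : Set (Set V)) : Prop :=
  ∃ F : Set (Set V), F.Finite ∧ F ⊆ E ∧
    ∀ b ∈ E, ∃ g : G₀, ∃ c ∈ F, (fun x => g • x) '' c = b

/-- `g` stabilises the subgraph `L` setwise. -/
def StabSub {G₀ : Type*} [Group G₀] [MulAction G₀ V] (G : SimpleGraph V) (g : G₀)
    (L : G.Subgraph) : Prop :=
  (∀ v : V, v ∈ L.verts ↔ g • v ∈ L.verts) ∧
    (∀ a b : V, L.Adj a b ↔ L.Adj (g • a) (g • b))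

end Paper

namespace StmtAux

variable {V : Type*} {G : SimpleGraph V}

lemma dist_le_one_of_adj {u v : V} (h : G.Adj u v) : G.dist u v ≤ 1 :=
  le_trans (SimpleGraph.dist_le h.toWalk) (by simp)

lemma dist_getVert_le (hG : G.Connected) {u v : V} (p : G.Walk u v) (i : ℕ) :
    G.dist u (p.getVert i) ≤ i := by
  induction i with
  | zero => simp [SimpleGraph.Walk.getVert_zero]
  | succ n ih =>
    by_cases hn : n < p.length
    · calc G.dist u (p.getVert (n+1)) ≤ G.dist u (p.getVert n) + G.dist (p.getVert n) (p.getVert (n+1)) :=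
        hG.dist_triangle
      _ ≤ n + 1 := add_le_add ih (dist_le_one_of_adj (p.adj_getVert_succ hn))
    · rw [p.getVert_of_length_le (by omega : p.length ≤ n + 1),
        ← p.getVert_of_length_le (by omega : p.length ≤ n)]
      omega

lemma dist_le_of_mem_support (hG : G.Connected) {u v w : V} (p : G.Walk u v)
    (h : w ∈ p.support) : G.dist u w ≤ p.length := by
  classical
  calc G.dist u w ≤ (p.takeUntil w h).length := SimpleGraph.dist_le _
  _ ≤ p.length := SimpleGraph.Walk.length_takeUntil_le p h

lemma ball_finite (hG : G.Connected) (hlf : ∀ v : V, (G.neighborSet v).Finite)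
    (x : V) (n : ℕ) : {y : V | G.dist x y ≤ n}.Finite := by
  induction n with
  | zero =>
    apply Set.Finite.subset (Set.finite_singleton x)
    intro y hy
    simp only [Set.mem_setOf_eq, Nat.le_zero] at hy
    have := (hG.dist_eq_zero_iff (u := x) (v := y)).mp hy
    simp [this.symm]
  | succ n ih =>
    have hsub : {y : V | G.dist x y ≤ n + 1} ⊆
        {y : V | G.dist x y ≤ n} ∪ ⋃ z ∈ {y : V | G.dist x y ≤ n}, G.neighborSet z := by
      intro y hy
      simp only [Set.mem_setOf_eq] at hy
      by_cases h : G.dist x y ≤ n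
      · exact Or.inl h
      · have hd : G.dist x y = n + 1 := by omega
        obtain ⟨p, hp⟩ := hG.exists_walk_length_eq_dist x y
        right
        refine Set.mem_biUnion (s := {y : V | G.dist x y ≤ n}) (show G.dist x (p.getVert n) ≤ n from dist_getVert_le hG p n) ?_
        have : G.Adj (p.getVert n) (p.getVert (n+1)) := p.adj_getVert_succ (by omega)
        have hlen : p.length = n + 1 := hp.trans hd
        rwa [show p.getVert (n+1) = y from hlen ▸ p.getVert_length] at this
    exact Set.Finite.subset (ih.union (ih.biUnion (fun z _ => hlf z))) hsub

lemma ball_ncard_le (hG : G.Connected) {d : ℕ} (hd : ∀ v : V, (G.neighborSet v).Finite ∧ (G.neighborSet v).ncard ≤ d)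
    (x : V) (n : ℕ) : {y : V | G.dist x y ≤ n}.ncard ≤ (d + 1) ^ n := by
  induction n with
  | zero =>
    have hsub : {y : V | G.dist x y ≤ 0} ⊆ {x} := by
      intro y hy
      simp only [Set.mem_setOf_eq, Nat.le_zero] at hy
      have := (hG.dist_eq_zero_iff (u := x) (v := y)).mp hy
      simp [this.symm]
    calc {y : V | G.dist x y ≤ 0}.ncard ≤ ({x} : Set V).ncard :=
      Set.ncard_le_ncard hsub (Set.finite_singleton x)
    _ = 1 := Set.ncard_singleton x
    _ = (d+1)^0 := by simp
  | succ n ih =>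
    have hfin : {y : V | G.dist x y ≤ n}.Finite := ball_finite hG (fun v => (hd v).1) x n
    have hsub : {y : V | G.dist x y ≤ n + 1} ⊆
        ⋃ z ∈ {y : V | G.dist x y ≤ n}, insert z (G.neighborSet z) := by
      intro y hy
      simp only [Set.mem_setOf_eq] at hy
      by_cases h : G.dist x y ≤ n
      · exact Set.mem_biUnion h (Set.mem_insert y _)
      · have hd' : G.dist x y = n + 1 := by omega
        obtain ⟨p, hp⟩ := hG.exists_walk_length_eq_dist x y
        refine Set.mem_biUnion (show G.dist x (p.getVert n) ≤ n from dist_getVert_le hG p n) ?_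
        have : G.Adj (p.getVert n) (p.getVert (n+1)) := p.adj_getVert_succ (by omega)
        have hlen : p.length = n + 1 := hp.trans hd'
        rw [show p.getVert (n+1) = y from hlen ▸ p.getVert_length] at this
        exact Set.mem_insert_of_mem _ this
    classical
    have hsub2 : {y : V | G.dist x y ≤ n + 1} ⊆
        ↑(hfin.toFinset.biUnion (fun z => ((hd z).1.insert z).toFinset)) := by
      intro y hy
      obtain ⟨z, hz, hyz⟩ := Set.mem_iUnion₂.mp (hsub hy)
      simp only [Finset.coe_biUnion, Set.mem_iUnion, Finset.mem_coe, Set.Finite.mem_toFinset]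
      exact ⟨z, hz, hyz⟩
    calc {y : V | G.dist x y ≤ n + 1}.ncard
        ≤ (hfin.toFinset.biUnion (fun z => ((hd z).1.insert z).toFinset)).card := by
          rw [← Set.ncard_coe_finset]
          exact Set.ncard_le_ncard hsub2 (Finset.finite_toSet _)
      _ ≤ ∑ z ∈ hfin.toFinset, ((hd z).1.insert z).toFinset.card :=
          Finset.card_biUnion_le
      _ ≤ ∑ z ∈ hfin.toFinset, (d + 1) := by
          apply Finset.sum_le_sum
          intro z _
          rw [← Set.ncard_eq_toFinset_card _ ((hd z).1.insert z)]
          calc (insert z (G.neighborSet z)).ncard ≤ (G.neighborSet z).ncard + 1 :=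
            Set.ncard_insert_le _ _
          _ ≤ d + 1 := by have := (hd z).2; omega
      _ = hfin.toFinset.card * (d + 1) := by rw [Finset.sum_const, smul_eq_mul]
      _ ≤ (d+1)^n * (d+1) := by
          apply Nat.mul_le_mul_right
          rw [← Set.ncard_eq_toFinset_card _ hfin]
          exact ih
      _ = (d+1)^(n+1) := by ring


/-- From a sequence whose consecutive terms are equal or adjacent, and in which every
vertex occurs finitely often, extract a simple ray by loop erasure. -/
lemma extract_ray (y : ℕ → V)
    (hy : ∀ k, y k = y (k + 1) ∨ G.Adj (y k) (y (k + 1)))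
    (hfin : ∀ v : V, {k : ℕ | y k = v}.Finite) :
    ∃ (r : ℕ → V) (c : ℕ → ℕ), StrictMono c ∧ (∀ n, r n = y (c n)) ∧
      Function.Injective r ∧ (∀ n, G.Adj (r n) (r (n + 1))) := by
  have key : ∀ k : ℕ, y (sSup {j | y j = y k}) = y k ∧
      ∀ j, y j = y k → j ≤ sSup {j | y j = y k} := by
    intro k
    have hne : {j | y j = y k}.Nonempty := ⟨k, rfl⟩
    have hbdd : BddAbove {j | y j = y k} := (hfin (y k)).bddAbove
    exact ⟨Nat.sSup_mem hne hbdd, fun j hj => le_csSup hbdd hj⟩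
  let c : ℕ → ℕ := fun n =>
    Nat.rec (sSup {j | y j = y 0}) (fun _ prev => sSup {j | y j = y (prev + 1)}) n
  have hc0 : c 0 = sSup {j | y j = y 0} := rfl
  have hcs : ∀ n, c (n + 1) = sSup {j | y j = y (c n + 1)} := fun n => rfl
  -- last occurrence property
  have hlast : ∀ n j, y j = y (c n) → j ≤ c n := by
    intro n
    match n with
    | 0 =>
      intro j hj
      rw [hc0] at hj ⊢
      exact (key 0).2 j (hj.trans (key 0).1)
    | Nat.succ n =>
      intro j hj
      rw [hcs n] at hj ⊢
      exact (key (c n + 1)).2 j (hj.trans (key (c n + 1)).1)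
  have hval : ∀ n, y (c (n + 1)) = y (c n + 1) := by
    intro n
    rw [hcs n]
    exact (key (c n + 1)).1
  have hmono : ∀ n, c n < c (n + 1) := by
    intro n
    have : c n + 1 ≤ c (n + 1) := by
      rw [hcs n]
      exact (key (c n + 1)).2 _ rfl
    omega
  have hsm : StrictMono c := strictMono_nat_of_lt_succ hmono
  have hadj : ∀ n, G.Adj (y (c n)) (y (c (n + 1))) := by
    intro n
    rw [hval n]
    rcases hy (c n) with h | h
    · exfalso
      have := hlast n (c n + 1) h.symm
      omega
    · exact h
  refine ⟨fun n => y (c n), c, hsm, fun n => rfl, ?_, hadj⟩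
  intro a b hab
  simp only at hab
  have hca : c a = c b := by
    have h1 : c a ≤ c b := hlast b (c a) hab
    have h2 : c b ≤ c a := hlast a (c b) hab.symm
    omega
  exact hsm.injective hca

/-- A walk along a segment of an adjacent-or-equal sequence. -/
lemma seq_walk (y : ℕ → V)
    (hy : ∀ k, y k = y (k + 1) ∨ G.Adj (y k) (y (k + 1))) :
    ∀ b a : ℕ, a ≤ b → ∃ w : G.Walk (y a) (y b),
      ∀ v ∈ w.support, ∃ j, a ≤ j ∧ j ≤ b ∧ y j = v := by
  intro b
  induction b with
  | zero =>
    intro a ha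
    have : a = 0 := by omega
    subst this
    exact ⟨Walk.nil, by simp⟩
  | succ b ih =>
    intro a ha
    by_cases hab : a = b + 1
    · subst hab
      refine ⟨Walk.nil, ?_⟩
      intro v hv
      simp only [Walk.support_nil, List.mem_singleton] at hv
      exact ⟨b + 1, le_rfl, le_rfl, hv.symm⟩
    · obtain ⟨w, hw⟩ := ih a (by omega)
      rcases hy b with h | h
      · refine ⟨w.copy rfl h, ?_⟩
        intro v hv
        rw [Walk.support_copy] at hv
        obtain ⟨j, hj1, hj2, hj3⟩ := hw v hv
        exact ⟨j, hj1, by omega, hj3⟩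
      · refine ⟨w.append h.toWalk, ?_⟩
        intro v hv
        rw [Walk.mem_support_append_iff] at hv
        rcases hv with hv | hv
        · obtain ⟨j, hj1, hj2, hj3⟩ := hw v hv
          exact ⟨j, hj1, by omega, hj3⟩
        · simp only [Adj.toWalk, Walk.support_cons, Walk.support_nil, List.mem_cons,
            List.mem_singleton, List.not_mem_nil, or_false] at hv
          rcases hv with hv | hv
          · exact ⟨b, by omega, by omega, hv.symm⟩
          · exact ⟨b + 1, by omega, le_rfl, hv.symm⟩

/-- Map a walk through a coarsely Lipschitz vertex map, filling in with geodesics. -/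
lemma map_walk {W : Type*} {H : SimpleGraph W} (hH : H.Connected) (f : V → W) (c : ℕ)
    (hf : ∀ a b : V, G.Adj a b → H.dist (f a) (f b) ≤ c)
    {u v : V} (w : G.Walk u v) :
    ∃ w' : H.Walk (f u) (f v), ∀ z ∈ w'.support, ∃ i ∈ w.support, H.dist (f i) z ≤ c := by
  induction w with
  | @nil u =>
    refine ⟨Walk.nil, ?_⟩
    intro z hz
    simp only [Walk.support_nil, List.mem_singleton] at hz
    subst hz
    exact ⟨u, by simp, by simp [SimpleGraph.dist_self]⟩
  | @cons a b v' h p ih =>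
    obtain ⟨w', hw'⟩ := ih
    obtain ⟨q, hq⟩ := hH.exists_walk_length_eq_dist (f a) (f b)
    refine ⟨q.append w', ?_⟩
    intro z hz
    rw [Walk.mem_support_append_iff] at hz
    rcases hz with hz | hz
    · refine ⟨a, by simp, ?_⟩
      calc H.dist (f a) z ≤ q.length := dist_le_of_mem_support hH q hz
        _ = H.dist (f a) (f b) := hq
        _ ≤ c := hf a b h
    · obtain ⟨i, hi, hdi⟩ := hw' z hz
      exact ⟨i, by simp [hi], hdi⟩

/-- Flatten a sequence with gaps at most `D` into an adjacent-or-equal sequence. -/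
lemma pad_seq (hG : G.Connected) (x : ℕ → V) {D : ℕ} (hD : 0 < D)
    (hx : ∀ n, G.dist (x n) (x (n + 1)) ≤ D) :
    ∃ y : ℕ → V, (∀ k, y k = y (k + 1) ∨ G.Adj (y k) (y (k + 1))) ∧
      (∀ n, y (D * n) = x n) ∧ (∀ k, G.dist (x (k / D)) (y k) ≤ D) := by
  choose p hp using fun n => hG.exists_walk_length_eq_dist (x n) (x (n + 1))
  have hplen : ∀ n, (p n).length ≤ D := fun n => le_trans (le_of_eq (hp n)) (hx n)
  refine ⟨fun k => (p (k / D)).getVert (k % D), ?_, ?_, ?_⟩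
  · intro k
    have hjD : k % D < D := Nat.mod_lt _ hD
    have hk : D * (k / D) + k % D = k := Nat.div_add_mod k D
    show (p (k / D)).getVert (k % D) = (p ((k + 1) / D)).getVert ((k + 1) % D) ∨
      G.Adj ((p (k / D)).getVert (k % D)) ((p ((k + 1) / D)).getVert ((k + 1) % D))
    by_cases hj1 : k % D + 1 < D
    · have h1 : (k + 1) / D = k / D := by
        conv_lhs => rw [← hk]
        rw [show D * (k / D) + k % D + 1 = (k % D + 1) + D * (k / D) by ring,
          Nat.add_mul_div_left _ _ hD, Nat.div_eq_of_lt hj1, Nat.zero_add]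
      have h2 : (k + 1) % D = k % D + 1 := by
        conv_lhs => rw [← hk]
        rw [show D * (k / D) + k % D + 1 = (k % D + 1) + (k / D) * D by ring,
          Nat.add_mul_mod_self_right, Nat.mod_eq_of_lt hj1]
      rw [h1, h2]
      by_cases hlen : k % D < (p (k / D)).length
      · exact Or.inr ((p (k / D)).adj_getVert_succ hlen)
      · left
        rw [(p (k / D)).getVert_of_length_le (by omega),
          (p (k / D)).getVert_of_length_le (by omega)]
    · have hjD' : k % D + 1 = D := by omega
      have h1 : k + 1 = D * (k / D + 1) := by rw [Nat.mul_succ]; omega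
      have h2 : (k + 1) / D = k / D + 1 := by rw [h1, Nat.mul_div_cancel_left _ hD]
      have h3 : (k + 1) % D = 0 := by rw [h1, Nat.mul_mod_right]
      rw [h2, h3, (p (k / D + 1)).getVert_zero]
      by_cases hlen : k % D < (p (k / D)).length
      · have hadj := (p (k / D)).adj_getVert_succ hlen
        rw [hjD', (p (k / D)).getVert_of_length_le (hplen _)] at hadj
        exact Or.inr hadj
      · left
        rw [(p (k / D)).getVert_of_length_le (by omega)]
  · intro n
    have h1 : (D * n) / D = n := by rw [Nat.mul_div_cancel_left _ hD]
    have h2 : (D * n) % D = 0 := Nat.mul_mod_right _ _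
    simp only [h1, h2, Walk.getVert_zero]
  · intro k
    calc G.dist (x (k / D)) ((p (k / D)).getVert (k % D)) ≤ k % D :=
      dist_getVert_le hG (p (k / D)) (k % D)
    _ ≤ D := le_of_lt (Nat.mod_lt _ hD)

lemma div_preimage_finite {D : ℕ} (hD : 0 < D) {E : Set ℕ} (hE : E.Finite) :
    {k : ℕ | k / D ∈ E}.Finite := by
  rcases Set.eq_empty_or_nonempty E with h | h
  · simp [h]
  obtain ⟨n₀, hn₀⟩ := hE.bddAbove
  refine Set.Finite.subset (Set.finite_Iio (D * (n₀ + 1))) ?_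
  intro k hk
  simp only [Set.mem_setOf_eq] at hk
  have h1 : k / D ≤ n₀ := hn₀ hk
  have h2 : k / D < n₀ + 1 := by omega
  have := (Nat.div_lt_iff_lt_mul hD).mp h2
  simp only [Set.mem_Iio]
  calc k < (n₀ + 1) * D := this
    _ = D * (n₀ + 1) := by ring

end StmtAux

open Paper in
theorem stmt11 (l : ℝ) (hl : 1 ≤ l) (d : ℕ) :
    ∃ C : ℝ, 0 < C ∧
      ∀ (V₁ V₂ : Type) (G₁ : SimpleGraph V₁) (G₂ : SimpleGraph V₂),
        G₁.Connected → G₂.Connected → DegLe G₁ d → BddVal G₂ →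
        ∀ f : V₁ → V₂, IsQI G₁ G₂ l l f →
          ∀ (Λ : G₁.Subgraph) (Λ' : G₂.Subgraph),
            Λ.coe.Connected → Λ'.coe.Connected →
            (∀ v ∈ Λ.verts, f v ∈ Λ'.verts) →
            ∀ fr : Λ.verts → Λ'.verts, (∀ v : Λ.verts, (fr v : V₂) = f (v : V₁)) →
              IsQI Λ.coe Λ'.coe l l fr →
              ∀ m : ℕ, VsGe Λ.coe m → VsGeR Λ'.coe (C * (m : ℝ)) := by
  classical
  set L : ℕ := ⌈l⌉₊ with hLdef
  have hlL : l ≤ (L : ℝ) := Nat.le_ceil l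
  have hL1 : 1 ≤ L := by
    have : (1 : ℝ) ≤ (L : ℝ) := le_trans hl hlL
    exact_mod_cast this
  have hl0 : (0 : ℝ) < l := lt_of_lt_of_le one_pos hl
  set D : ℕ := 3 * L ^ 2 + L with hDdef
  have hD : 0 < D := by positivity
  set R1 : ℕ := L * D + 2 * L with hR1def
  set R : ℕ := R1 + 2 * L + 1 with hRdef
  set P : ℕ := 2 * L * R + L ^ 2 with hPdef
  refine ⟨1 / ((d : ℝ) + 1) ^ P, by positivity, ?_⟩
  intro V₁ V₂ G₁ G₂ _ _ hd₁ hbv₂ f _ Λ Λ' hΛc hΛ'c _ fr _ hfr m hvs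
  obtain ⟨d₂, hd₂⟩ := hbv₂
  -- degree and local finiteness transfer to the subgraphs
  have hdegA : ∀ v : ↥Λ.verts, (Λ.coe.neighborSet v).Finite ∧
      (Λ.coe.neighborSet v).ncard ≤ d := by
    intro v
    have himg : Subtype.val '' (Λ.coe.neighborSet v) ⊆ G₁.neighborSet (v : V₁) := by
      rintro w ⟨w', hw', rfl⟩
      exact hw'.adj_sub
    have hfin : (Λ.coe.neighborSet v).Finite := by
      have : (Λ.coe.neighborSet v) ⊆ Subtype.val ⁻¹' (G₁.neighborSet (v : V₁)) := by
        intro w hw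
        exact hw.adj_sub
      exact Set.Finite.subset ((hd₁ (v : V₁)).1.preimage Subtype.val_injective.injOn) this
    refine ⟨hfin, ?_⟩
    rw [← Set.ncard_image_of_injective _ Subtype.val_injective]
    exact le_trans (Set.ncard_le_ncard himg (hd₁ (v : V₁)).1) (hd₁ (v : V₁)).2
  have hlfA : ∀ v : ↥Λ.verts, (Λ.coe.neighborSet v).Finite := fun v => (hdegA v).1
  have hlfB : ∀ w : ↥Λ'.verts, (Λ'.coe.neighborSet w).Finite := by
    intro w
    have : (Λ'.coe.neighborSet w) ⊆ Subtype.val ⁻¹' (G₂.neighborSet (w : V₂)) := by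
      intro z hz
      exact hz.adj_sub
    exact Set.Finite.subset ((hd₂ (w : V₂)).1.preimage Subtype.val_injective.injOn) this
  -- quantitative consequences of the quasi-isometry, in ℕ
  have hup : ∀ a b : ↥Λ.verts,
      Λ'.coe.dist (fr a) (fr b) ≤ L * Λ.coe.dist a b + L := by
    intro a b
    have h := (hfr.1 a b).2
    have hd0 : (0 : ℝ) ≤ (Λ.coe.dist a b : ℝ) := Nat.cast_nonneg _
    have hfinal : (Λ'.coe.dist (fr a) (fr b) : ℝ) ≤
        (L : ℝ) * (Λ.coe.dist a b : ℝ) + (L : ℝ) := by nlinarith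
    exact_mod_cast hfinal
  have hlow : ∀ a b : ↥Λ.verts,
      Λ.coe.dist a b ≤ L * Λ'.coe.dist (fr a) (fr b) + L * L := by
    intro a b
    have h := (hfr.1 a b).1
    have hd0 : (0 : ℝ) ≤ (Λ'.coe.dist (fr a) (fr b) : ℝ) := Nat.cast_nonneg _
    have h2 : (Λ.coe.dist a b : ℝ) ≤ l * (Λ'.coe.dist (fr a) (fr b) : ℝ) + l * l := by
      have := (div_le_iff₀ hl0).mp (show (Λ.coe.dist a b : ℝ) / l ≤
        (Λ'.coe.dist (fr a) (fr b) : ℝ) + l by linarith)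
      nlinarith
    have hfinal : (Λ.coe.dist a b : ℝ) ≤
        (L : ℝ) * (Λ'.coe.dist (fr a) (fr b) : ℝ) + (L : ℝ) * (L : ℝ) := by nlinarith
    exact_mod_cast hfinal
  obtain ⟨g, hg⟩ : ∃ g : ↥Λ'.verts → ↥Λ.verts,
      ∀ w : ↥Λ'.verts, Λ'.coe.dist w (fr (g w)) ≤ L := by
    choose g hg using hfr.2
    refine ⟨g, fun w => ?_⟩
    have : (Λ'.coe.dist w (fr (g w)) : ℝ) ≤ (L : ℝ) := le_trans (hg w) hlL
    exact_mod_cast this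
  -- adjacency is 2L-Lipschitz through fr
  have h2L : ∀ a b : ↥Λ.verts, Λ.coe.Adj a b → Λ'.coe.dist (fr a) (fr b) ≤ 2 * L := by
    intro a b hab
    have h1 : Λ.coe.dist a b ≤ 1 := StmtAux.dist_le_one_of_adj hab
    calc Λ'.coe.dist (fr a) (fr b) ≤ L * Λ.coe.dist a b + L := hup a b
      _ ≤ L * 1 + L := by
          have := Nat.mul_le_mul_left L h1
          omega
      _ = 2 * L := by ring
  -- build, for each ray in Λ', a proper adjacent-or-equal tracking sequence in Λ
  have build : ∀ r : ℕ → ↥Λ'.verts, RayIn Λ'.coe r →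
      ∃ y : ℕ → ↥Λ.verts,
        (∀ k, y k = y (k + 1) ∨ Λ.coe.Adj (y k) (y (k + 1))) ∧
        (∀ k, Λ'.coe.dist (r (k / D)) (fr (y k)) ≤ R1) ∧
        (∀ v, {k | y k = v}.Finite) := by
    intro r hr
    have hxd : ∀ n, Λ.coe.dist (g (r n)) (g (r (n + 1))) ≤ D := by
      intro n
      have t1 : Λ'.coe.dist (r n) (fr (g (r n))) ≤ L := hg (r n)
      have t2 : Λ'.coe.dist (r n) (r (n + 1)) ≤ 1 :=
        StmtAux.dist_le_one_of_adj (hr.2 n)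
      have t3 : Λ'.coe.dist (r (n + 1)) (fr (g (r (n + 1)))) ≤ L := hg (r (n + 1))
      have tb : Λ'.coe.dist (fr (g (r n))) (fr (g (r (n + 1)))) ≤ 2 * L + 1 := by
        calc Λ'.coe.dist (fr (g (r n))) (fr (g (r (n + 1))))
            ≤ Λ'.coe.dist (fr (g (r n))) (r n) +
              Λ'.coe.dist (r n) (fr (g (r (n + 1)))) := hΛ'c.dist_triangle
          _ ≤ Λ'.coe.dist (fr (g (r n))) (r n) +
              (Λ'.coe.dist (r n) (r (n + 1)) +
                Λ'.coe.dist (r (n + 1)) (fr (g (r (n + 1))))) := by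
              have := hΛ'c.dist_triangle (u := r n) (v := r (n + 1))
                (w := fr (g (r (n + 1))))
              omega
          _ ≤ L + (1 + L) := by
              rw [SimpleGraph.dist_comm] at t1
              omega
          _ = 2 * L + 1 := by ring
      calc Λ.coe.dist (g (r n)) (g (r (n + 1)))
          ≤ L * Λ'.coe.dist (fr (g (r n))) (fr (g (r (n + 1)))) + L * L := hlow _ _
        _ ≤ L * (2 * L + 1) + L * L := by
            have := Nat.mul_le_mul_left L tb
            omega
        _ = D := by rw [hDdef]; ring
    obtain ⟨y, hy1, hy2, hy3⟩ := StmtAux.pad_seq hΛc (fun n => g (r n)) hD hxd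
    have hclose : ∀ k, Λ'.coe.dist (r (k / D)) (fr (y k)) ≤ R1 := by
      intro k
      have t1 : Λ'.coe.dist (r (k / D)) (fr (g (r (k / D)))) ≤ L := hg _
      have t2 : Λ'.coe.dist (fr (g (r (k / D)))) (fr (y k)) ≤ L * D + L := by
        calc Λ'.coe.dist (fr (g (r (k / D)))) (fr (y k))
            ≤ L * Λ.coe.dist (g (r (k / D))) (y k) + L := hup _ _
          _ ≤ L * D + L := by
              have := Nat.mul_le_mul_left L (hy3 k)
              omega
      calc Λ'.coe.dist (r (k / D)) (fr (y k))
          ≤ Λ'.coe.dist (r (k / D)) (fr (g (r (k / D)))) +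
            Λ'.coe.dist (fr (g (r (k / D)))) (fr (y k)) := hΛ'c.dist_triangle
        _ ≤ L + (L * D + L) := by omega
        _ = R1 := by rw [hR1def]; ring
    refine ⟨y, hy1, hclose, ?_⟩
    intro v
    have hBfin : {w : ↥Λ'.verts | Λ'.coe.dist (fr v) w ≤ R1}.Finite :=
      StmtAux.ball_finite hΛ'c hlfB (fr v) R1
    have hEfin : {n : ℕ | r n ∈ {w : ↥Λ'.verts | Λ'.coe.dist (fr v) w ≤ R1}}.Finite :=
      Set.Finite.preimage hr.1.injOn hBfin
    have hsub : {k | y k = v} ⊆ {k : ℕ | k / D ∈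
        {n : ℕ | r n ∈ {w : ↥Λ'.verts | Λ'.coe.dist (fr v) w ≤ R1}}} := by
      intro k hk
      have := hclose k
      rw [hk] at this
      simp only [Set.mem_setOf_eq]
      rwa [SimpleGraph.dist_comm] at this
    exact Set.Finite.subset (StmtAux.div_preimage_finite hD hEfin) hsub
  -- now the main argument
  intro r₁ r₂ hr₁ hr₂ S hSfin hSep
  obtain ⟨y₁, hy₁adj, hy₁cl, hy₁fin⟩ := build r₁ hr₁
  obtain ⟨y₂, hy₂adj, hy₂cl, hy₂fin⟩ := build r₂ hr₂
  obtain ⟨ρ₁, c₁, hc₁mono, hρ₁, hρ₁inj, hρ₁adj⟩ :=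
    StmtAux.extract_ray y₁ hy₁adj hy₁fin
  obtain ⟨ρ₂, c₂, hc₂mono, hρ₂, hρ₂inj, hρ₂adj⟩ :=
    StmtAux.extract_ray y₂ hy₂adj hy₂fin
  set T : Set ↥Λ.verts := {a | ∃ s ∈ S, Λ'.coe.dist (fr a) s ≤ R} with hTdef
  -- cardinality bound for T
  have hTs : ∀ s : ↥Λ'.verts, {a : ↥Λ.verts | Λ'.coe.dist (fr a) s ≤ R}.Finite ∧
      {a : ↥Λ.verts | Λ'.coe.dist (fr a) s ≤ R}.ncard ≤ (d + 1) ^ P := by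
    intro s
    by_cases hne : {a : ↥Λ.verts | Λ'.coe.dist (fr a) s ≤ R}.Nonempty
    · obtain ⟨a₀, ha₀⟩ := hne
      have hsub : {a : ↥Λ.verts | Λ'.coe.dist (fr a) s ≤ R} ⊆
          {a : ↥Λ.verts | Λ.coe.dist a₀ a ≤ P} := by
        intro a ha
        simp only [Set.mem_setOf_eq] at ha ha₀ ⊢
        have hBd : Λ'.coe.dist (fr a₀) (fr a) ≤ 2 * R := by
          calc Λ'.coe.dist (fr a₀) (fr a)
              ≤ Λ'.coe.dist (fr a₀) s + Λ'.coe.dist s (fr a) := hΛ'c.dist_triangle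
            _ ≤ R + R := by
                rw [SimpleGraph.dist_comm (u := s)]
                omega
            _ = 2 * R := by ring
        calc Λ.coe.dist a₀ a ≤ L * Λ'.coe.dist (fr a₀) (fr a) + L * L := hlow _ _
          _ ≤ L * (2 * R) + L * L := by
              have := Nat.mul_le_mul_left L hBd
              omega
          _ = P := by rw [hPdef]; ring
      have hball : {a : ↥Λ.verts | Λ.coe.dist a₀ a ≤ P}.Finite :=
        StmtAux.ball_finite hΛc hlfA a₀ P
      exact ⟨hball.subset hsub, le_trans (Set.ncard_le_ncard hsub hball)
        (StmtAux.ball_ncard_le hΛc hdegA a₀ P)⟩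
    · rw [Set.not_nonempty_iff_eq_empty] at hne
      simp [hne]
  have hTfin : T.Finite := by
    refine Set.Finite.subset (hSfin.biUnion fun s _ => (hTs s).1) ?_
    rintro a ⟨s, hs, h⟩
    exact Set.mem_biUnion hs h
  have hTcard : T.ncard ≤ S.ncard * (d + 1) ^ P := by
    have hsub2 : T ⊆ ↑(hSfin.toFinset.biUnion fun s => (hTs s).1.toFinset) := by
      rintro a ⟨s, hs, h⟩
      simp only [Finset.coe_biUnion, Set.mem_iUnion, Finset.mem_coe,
        Set.Finite.mem_toFinset]
      exact ⟨s, hs, h⟩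
    calc T.ncard ≤ (hSfin.toFinset.biUnion fun s => (hTs s).1.toFinset).card := by
          rw [← Set.ncard_coe_finset]
          exact Set.ncard_le_ncard hsub2 (Finset.finite_toSet _)
      _ ≤ ∑ s ∈ hSfin.toFinset, ((hTs s).1.toFinset).card := Finset.card_biUnion_le
      _ ≤ ∑ _s ∈ hSfin.toFinset, (d + 1) ^ P := by
          apply Finset.sum_le_sum
          intro s _
          rw [← Set.ncard_eq_toFinset_card _ (hTs s).1]
          exact (hTs s).2
      _ = hSfin.toFinset.card * (d + 1) ^ P := by rw [Finset.sum_const, smul_eq_mul]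
      _ = S.ncard * (d + 1) ^ P := by rw [← Set.ncard_eq_toFinset_card _ hSfin]
  -- escape: tracking sequences eventually avoid T
  have escape : ∀ (r : ℕ → ↥Λ'.verts) (y : ℕ → ↥Λ.verts), Function.Injective r →
      (∀ k, Λ'.coe.dist (r (k / D)) (fr (y k)) ≤ R1) →
      ∃ M₁ : ℕ, ∀ k, M₁ ≤ k → y k ∉ T := by
    intro r y hinj hclose
    have hBfin : {w : ↥Λ'.verts | ∃ s ∈ S, Λ'.coe.dist w s ≤ R + R1}.Finite := by
      refine Set.Finite.subset (hSfin.biUnion fun s _ =>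
        StmtAux.ball_finite hΛ'c hlfB s (R + R1)) ?_
      rintro w ⟨s, hs, h⟩
      refine Set.mem_biUnion hs ?_
      simpa only [Set.mem_setOf_eq, SimpleGraph.dist_comm] using h
    have hEfin : {n : ℕ | r n ∈
        {w : ↥Λ'.verts | ∃ s ∈ S, Λ'.coe.dist w s ≤ R + R1}}.Finite :=
      Set.Finite.preimage hinj.injOn hBfin
    have hfinT : {k : ℕ | y k ∈ T}.Finite := by
      refine Set.Finite.subset (StmtAux.div_preimage_finite hD hEfin) ?_
      rintro k hk
      obtain ⟨s, hs, hds⟩ := hk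
      simp only [Set.mem_setOf_eq]
      refine ⟨s, hs, ?_⟩
      calc Λ'.coe.dist (r (k / D)) s
          ≤ Λ'.coe.dist (r (k / D)) (fr (y k)) + Λ'.coe.dist (fr (y k)) s :=
            hΛ'c.dist_triangle
        _ ≤ R1 + R := by have := hclose k; omega
        _ = R + R1 := by ring
    obtain ⟨M₀, hM₀⟩ := hfinT.bddAbove
    refine ⟨M₀ + 1, fun k hk hkT => ?_⟩
    have : k ≤ M₀ := hM₀ hkT
    omega
  obtain ⟨M₁, hM₁⟩ := escape r₁ y₁ hr₁.1 hy₁cl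
  obtain ⟨M₂, hM₂⟩ := escape r₂ y₂ hr₂.1 hy₂cl
  obtain ⟨N, -, -, hN3⟩ := hSep
  set M : ℕ := M₁ + M₂ + D * (N + 1) with hMdef
  -- reachability within each tracking sequence
  have reach : ∀ (y : ℕ → ↥Λ.verts),
      (∀ k, y k = y (k + 1) ∨ Λ.coe.Adj (y k) (y (k + 1))) →
      ∀ My : ℕ, (∀ k, My ≤ k → y k ∉ T) →
      ∀ a b, My ≤ a → My ≤ b → ReachOut Λ.coe T (y a) (y b) := by
    intro y hy My hesc a b ha hb
    rcases le_total a b with h | h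
    · obtain ⟨w, hw⟩ := StmtAux.seq_walk y hy b a h
      refine ⟨w, fun v hv => ?_⟩
      obtain ⟨k, hk1, _, hk3⟩ := hw v hv
      exact hk3 ▸ hesc k (le_trans ha hk1)
    · obtain ⟨w, hw⟩ := StmtAux.seq_walk y hy a b h
      refine ⟨w.reverse, fun v hv => ?_⟩
      rw [SimpleGraph.Walk.support_reverse, List.mem_reverse] at hv
      obtain ⟨k, hk1, _, hk3⟩ := hw v hv
      exact hk3 ▸ hesc k (le_trans hb hk1)
  -- the pulled-back separation
  have hsepT : SepComps Λ.coe T ρ₁ ρ₂ := by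
    refine ⟨M, ?_, ?_, ?_⟩
    · intro i j hi hj
      rw [hρ₁ i, hρ₁ j]
      exact reach y₁ hy₁adj M₁ hM₁ (c₁ i) (c₁ j)
        (le_trans (by omega) (le_trans hi hc₁mono.le_apply))
        (le_trans (by omega) (le_trans hj hc₁mono.le_apply))
    · intro i j hi hj
      rw [hρ₂ i, hρ₂ j]
      exact reach y₂ hy₂adj M₂ hM₂ (c₂ i) (c₂ j)
        (le_trans (by omega) (le_trans hi hc₂mono.le_apply))
        (le_trans (by omega) (le_trans hj hc₂mono.le_apply))
    · intro i j hi hj hcon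
      obtain ⟨w, hw⟩ := hcon
      -- indices in the original rays
      have hci : D * (N + 1) ≤ c₁ i := le_trans (by omega) (le_trans hi hc₁mono.le_apply)
      have hcj : D * (N + 1) ≤ c₂ j := le_trans (by omega) (le_trans hj hc₂mono.le_apply)
      have hn₁ : N ≤ c₁ i / D := by
        have : N + 1 ≤ c₁ i / D :=
          (Nat.le_div_iff_mul_le hD).mpr (by rw [Nat.mul_comm]; omega)
        omega
      have hn₂ : N ≤ c₂ j / D := by
        have : N + 1 ≤ c₂ j / D :=
          (Nat.le_div_iff_mul_le hD).mpr (by rw [Nat.mul_comm]; omega)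
        omega
      refine hN3 (c₁ i / D) (c₂ j / D) hn₁ hn₂ ?_
      -- map the walk into Λ'
      obtain ⟨w', hw'⟩ := StmtAux.map_walk hΛ'c fr (2 * L) h2L w
      -- geodesics from the ray points to the images of the endpoints
      obtain ⟨p₁, hp₁len⟩ :=
        hΛ'c.exists_walk_length_eq_dist (fr (ρ₁ i)) (r₁ (c₁ i / D))
      obtain ⟨p₂, hp₂len⟩ :=
        hΛ'c.exists_walk_length_eq_dist (fr (ρ₂ j)) (r₂ (c₂ j / D))
      have hp₁d : Λ'.coe.dist (fr (ρ₁ i)) (r₁ (c₁ i / D)) ≤ R1 := by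
        rw [hρ₁ i, SimpleGraph.dist_comm]
        exact hy₁cl (c₁ i)
      have hp₂d : Λ'.coe.dist (fr (ρ₂ j)) (r₂ (c₂ j / D)) ≤ R1 := by
        rw [hρ₂ j, SimpleGraph.dist_comm]
        exact hy₂cl (c₂ j)
      refine ⟨p₁.reverse.append (w'.append p₂), ?_⟩
      intro z hz
      intro hzS
      rw [SimpleGraph.Walk.mem_support_append_iff] at hz
      rcases hz with hz | hz
      · -- z on the first geodesic
        rw [SimpleGraph.Walk.support_reverse, List.mem_reverse] at hz
        have hdz : Λ'.coe.dist (fr (ρ₁ i)) z ≤ R1 := by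
          calc Λ'.coe.dist (fr (ρ₁ i)) z ≤ p₁.length :=
            StmtAux.dist_le_of_mem_support hΛ'c p₁ hz
          _ = _ := hp₁len
          _ ≤ R1 := hp₁d
        have hstart : ρ₁ i ∉ T := hw (ρ₁ i) (SimpleGraph.Walk.start_mem_support w)
        exact hstart ⟨z, hzS, by omega⟩
      rw [SimpleGraph.Walk.mem_support_append_iff] at hz
      rcases hz with hz | hz
      · -- z on the image walk
        obtain ⟨i', hi', hdi'⟩ := hw' z hz
        have hi'T : i' ∉ T := hw i' hi'
        exact hi'T ⟨z, hzS, by omega⟩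
      · -- z on the second geodesic
        have hdz : Λ'.coe.dist (fr (ρ₂ j)) z ≤ R1 := by
          calc Λ'.coe.dist (fr (ρ₂ j)) z ≤ p₂.length :=
            StmtAux.dist_le_of_mem_support hΛ'c p₂ hz
          _ = _ := hp₂len
          _ ≤ R1 := hp₂d
        have hend : ρ₂ j ∉ T := hw (ρ₂ j) (SimpleGraph.Walk.end_mem_support w)
        exact hend ⟨z, hzS, by omega⟩
  -- apply the hypothesis on Λ
  have hm : m ≤ T.ncard := hvs ρ₁ ρ₂ ⟨hρ₁inj, hρ₁adj⟩ ⟨hρ₂inj, hρ₂adj⟩ T hTfin hsepT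
  -- conclude
  have hKpos : (0 : ℝ) < ((d : ℝ) + 1) ^ P := by positivity
  rw [div_mul_eq_mul_div, one_mul, div_le_iff₀ hKpos]
  have : (m : ℝ) ≤ (S.ncard : ℝ) * ((d : ℝ) + 1) ^ P := by
    have h1 : (m : ℕ) ≤ S.ncard * (d + 1) ^ P := le_trans hm hTcard
    exact_mod_cast h1
  exact this
end

section
/- Let X be a connected graph, let b ∈ 𝓑X, and let e₁, e₂ ∈ δb. Suppose there exist a path p contained in the induced subgraph X[b] and a path q contained in the induced subgraph X[b*], each connecting an endpoint of e₁ to an endpoint of e₂. Then there exists a tight element b' ∈ 𝓑X such that δb' ⊆ δb and e₁, e₂ ∈ δb'. -/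
open SimpleGraph

namespace Paper

variable {V : Type*} {G : SimpleGraph V} {S T A : Set V} {a b c y : V}

namespace ReachOut

lemma refl (ha : a ∉ S) : ReachOut G S a a := ⟨.nil, by simpa using ha⟩

lemma notMem_left (h : ReachOut G S a b) : a ∉ S :=
  h.elim fun p hp => hp a p.start_mem_support

lemma notMem_right (h : ReachOut G S a b) : b ∉ S :=
  h.elim fun p hp => hp b p.end_mem_support

lemma cons (hadj : G.Adj a b) (ha : a ∉ S) (h : ReachOut G S b c) : ReachOut G S a c := by
  obtain ⟨p, hp⟩ := h
  refine ⟨p.cons hadj, fun v hv => ?_⟩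
  rcases (Walk.mem_support_iff _).mp hv with rfl | hv
  exacts [ha, hp v hv]

lemma concat (h : ReachOut G S a b) (hadj : G.Adj b c) (hc : c ∉ S) : ReachOut G S a c := by
  obtain ⟨p, hp⟩ := h
  refine ⟨p.concat hadj, fun v hv => ?_⟩
  simp only [Walk.support_concat, List.mem_append, List.mem_singleton] at hv
  rcases hv with hv | rfl
  exacts [hp v hv, hc]

lemma mono (hTS : T ⊆ S) (h : ReachOut G S a b) : ReachOut G T a b :=
  h.elim fun p hp => ⟨p, fun v hv hvT => hp v hv (hTS hvT)⟩

lemma of_mem_support {p : G.Walk a b} (hp : ∀ v ∈ p.support, v ∉ S) {z : V}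
    (hz : z ∈ p.support) : ReachOut G S a z := by
  classical
  exact ⟨p.takeUntil z hz, fun v hv => hp v (p.support_takeUntil_subset_support hz hv)⟩

lemma of_reachable_induce {ha : a ∈ S} {hb : b ∈ S}
    (h : (G.induce S).Reachable ⟨a, ha⟩ ⟨b, hb⟩) : ReachOut G Sᶜ a b := by
  obtain ⟨p⟩ := h
  refine ⟨p.map (Embedding.induce S).toHom, fun v hv => ?_⟩
  replace hv : v ∈ (p.map (Embedding.induce S).toHom).support := hv
  rw [Walk.support_map, List.mem_map] at hv
  obtain ⟨⟨v, hvS⟩, -, rfl⟩ := hv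
  exact not_not_intro hvS

lemma reachable_induce (h : ReachOut G S a b) :
    (G.induce Sᶜ).Reachable ⟨a, h.notMem_left⟩ ⟨b, h.notMem_right⟩ :=
  h.elim fun p hp => ⟨p.induce Sᶜ hp⟩

end ReachOut

/-- The connected component of `a` in `G - S` (empty if `a ∈ S`). -/
def compOut (G : SimpleGraph V) (S : Set V) (a : V) : Set V := {v | ReachOut G S a v}

lemma compOut_subset_compl : compOut G S a ⊆ Sᶜ := fun _ h => ReachOut.notMem_right h

lemma self_mem_compOut (ha : a ∉ S) : a ∈ compOut G S a := ReachOut.refl ha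

lemma connected_induce_compOut (ha : a ∉ S) : (G.induce (compOut G S a)).Connected := by
  rw [connected_iff_exists_forall_reachable]
  refine ⟨⟨a, self_mem_compOut ha⟩, fun ⟨v, ⟨p, hp⟩⟩ => ?_⟩
  exact ⟨p.induce _ fun z hz => ReachOut.of_mem_support hp hz⟩

lemma cob_compl (s : Set V) : cob G sᶜ = cob G s := by
  ext e
  constructor <;> rintro ⟨x, y, rfl, hxy, hx, hy⟩
  · exact ⟨y, x, Sym2.eq_swap, hxy.symm, not_not.mp hy, hx⟩
  · exact ⟨y, x, Sym2.eq_swap, hxy.symm, hy, not_not_intro hx⟩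

lemma cob_compOut_subset : cob G (compOut G S a) ⊆ cob G Sᶜ := by
  rintro _ ⟨u, w, rfl, huw, hu, hw⟩
  refine ⟨u, w, rfl, huw, compOut_subset_compl hu, fun hwS => hw ?_⟩
  exact ReachOut.concat hu huw hwS

/-- Follow the walk until it first meets `A`: a vertex outside `A` adjacent to the component
would belong to it. -/
lemma exists_reachOut_compl_compOut {v a : V} (p : G.Walk v a) (ha : a ∈ A)
    (hv : v ∉ compOut G A y) : ∃ a' ∈ A, ReachOut G (compOut G A y) v a' := by
  induction p with
  | nil => exact ⟨_, ha, ReachOut.refl hv⟩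
  | @cons v w a hvw p ih =>
    by_cases hvA : v ∈ A
    · exact ⟨v, hvA, ReachOut.refl hv⟩
    have hw : w ∉ compOut G A y := fun hw => hv (ReachOut.concat hw hvw.symm hvA)
    obtain ⟨a', ha', h⟩ := ih ha hw
    exact ⟨a', ha', h.cons hvw hv⟩

lemma tight_compl_compOut (hG : G.Connected) (hA : (G.induce A).Connected) (hy : y ∉ A) :
    Tight G (compOut G A y)ᶜ := by
  refine ⟨?_, by rw [compl_compl]; exact connected_induce_compOut hy⟩
  have hAC : A ⊆ (compOut G A y)ᶜ := Set.subset_compl_comm.mp compOut_subset_compl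
  obtain ⟨⟨x, hx⟩⟩ := hA.nonempty
  rw [connected_iff_exists_forall_reachable]
  refine ⟨⟨x, hAC hx⟩, fun ⟨v, hv⟩ => ?_⟩
  obtain ⟨a, ha, hva⟩ := exists_reachOut_compl_compOut (hG.preconnected v x).some hx hv
  have hax := (hA.preconnected ⟨a, ha⟩ ⟨x, hx⟩).map (G.induceHomOfLE hAC).toHom
  exact (hva.reachable_induce.trans hax).symm

end Paper

open Paper in
theorem stmt12 {V : Type*} (X : SimpleGraph V) (hc : X.Connected)
    (b : Set V) (hb : MemBX X b)
    (x₁ y₁ x₂ y₂ : V)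
    (h₁ : X.Adj x₁ y₁) (h₂ : X.Adj x₂ y₂)
    (hx₁ : x₁ ∈ b) (hy₁ : y₁ ∉ b) (hx₂ : x₂ ∈ b) (hy₂ : y₂ ∉ b)
    (hp : (X.induce b).Reachable ⟨x₁, hx₁⟩ ⟨x₂, hx₂⟩)
    (hq : (X.induce bᶜ).Reachable ⟨y₁, Set.mem_compl hy₁⟩ ⟨y₂, Set.mem_compl hy₂⟩) :
    ∃ b' : Set V, MemBX X b' ∧ Tight X b' ∧ cob X b' ⊆ cob X b ∧
      s(x₁, y₁) ∈ cob X b' ∧ s(x₂, y₂) ∈ cob X b' := by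
  -- `b'` is the complement of the component of `y₁` in `X - A`, `A` the component of `x₁` in `X[b]`.
  let A := compOut X bᶜ x₁
  let C := compOut X A y₁
  have hx₂A : x₂ ∈ A := ReachOut.of_reachable_induce hp
  have hy₁A : y₁ ∉ A := fun h => compOut_subset_compl h hy₁
  have hy₂C : y₂ ∈ C := (ReachOut.of_reachable_induce hq).mono compOut_subset_compl
  have hAC : A ⊆ Cᶜ := Set.subset_compl_comm.mp compOut_subset_compl
  have hcob : cob X Cᶜ ⊆ cob X b :=
    calc cob X Cᶜ = cob X C := cob_compl C
      _ ⊆ cob X Aᶜ := cob_compOut_subset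
      _ = cob X A := cob_compl A
      _ ⊆ cob X bᶜᶜ := cob_compOut_subset
      _ = cob X b := by rw [compl_compl]
  refine ⟨Cᶜ, hb.subset hcob,
    tight_compl_compOut hc (connected_induce_compOut (not_not_intro hx₁)) hy₁A, hcob,
    ⟨x₁, y₁, rfl, h₁, hAC (self_mem_compOut (not_not_intro hx₁)),
      not_not_intro (self_mem_compOut hy₁A)⟩,
    ⟨x₂, y₂, rfl, h₂, hAC hx₂A, not_not_intro hy₂C⟩⟩
end
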